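/- arXiv:1503.02710 — 4 statements merged into one kernel-verified Lean document; each statement's English description precedes it below -/
import Mathlib

section
/- The cubic connectedness locus, i.e. the set of parameters (a,b) ∈ ℂ² such that both critical points a and −a of P_{a,b} have bounded forward orbits, is a compact subset of ℂ². -/
/-- The monic centered cubic polynomial `P_{a,b}(z) = z^3 - 3 a^2 z + b`. -/
noncomputable def cubicP (a b z : ℂ) : ℂ := z ^ 3 - 3 * a ^ 2 * z + b

/-- Escape radius for `cubicP a b`. -/
noncomputable def Rad (a b : ℂ) : ℝ := Real.sqrt (3 * ‖a‖ ^ 2 + ‖b‖ + 2)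

lemma Rad_sq (a b : ℂ) : (Rad a b) ^ 2 = 3 * ‖a‖ ^ 2 + ‖b‖ + 2 :=
  Real.sq_sqrt (by positivity)

lemma one_le_Rad (a b : ℂ) : 1 ≤ Rad a b := by
  rw [show (1:ℝ) = Real.sqrt 1 from Real.sqrt_one.symm]
  exact Real.sqrt_le_sqrt (by nlinarith [sq_nonneg ‖a‖, norm_nonneg b])

lemma escape_step (a b z : ℂ) (hz : Rad a b ≤ ‖z‖) :
    2 * ‖z‖ ≤ ‖cubicP a b z‖ := by
  have h1 : 1 ≤ ‖z‖ := le_trans (one_le_Rad a b) hz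
  have hz2 : 3 * ‖a‖ ^ 2 + ‖b‖ + 2 ≤ ‖z‖ ^ 2 := by
    rw [← Rad_sq]
    exact pow_le_pow_left₀ (Real.sqrt_nonneg _) hz 2
  have key : ‖z‖ ^ 3 - 3 * ‖a‖ ^ 2 * ‖z‖ - ‖b‖ ≤ ‖cubicP a b z‖ := by
    have e1 : ‖z ^ 3 - 3 * a ^ 2 * z‖ ≤ ‖cubicP a b z‖ + ‖b‖ := by
      calc ‖z ^ 3 - 3 * a ^ 2 * z‖ = ‖cubicP a b z - b‖ := by rw [cubicP]; ring_nf
        _ ≤ _ := norm_sub_le _ _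
    have e2 : ‖z ^ 3‖ - ‖3 * a ^ 2 * z‖ ≤ ‖z ^ 3 - 3 * a ^ 2 * z‖ :=
      norm_sub_norm_le (z ^ 3) (3 * a ^ 2 * z)
    rw [norm_pow] at e2
    have e3 : ‖3 * a ^ 2 * z‖ = 3 * ‖a‖ ^ 2 * ‖z‖ := by
      simp [norm_mul, norm_pow]
    linarith
  nlinarith [mul_le_mul_of_nonneg_left hz2 (norm_nonneg z),
    mul_nonneg (sub_nonneg.2 h1) (norm_nonneg b), norm_nonneg b, norm_nonneg z]

lemma escape (a b z : ℂ) (hz : Rad a b ≤ ‖z‖) (k : ℕ) :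
    2 ^ k * ‖z‖ ≤ ‖(cubicP a b)^[k] z‖ := by
  induction k with
  | zero => simp
  | succ n ih =>
    have hz0 : 0 ≤ ‖z‖ := norm_nonneg z
    have hp : (1:ℝ) ≤ 2 ^ n := one_le_pow₀ (by norm_num)
    have h1 : Rad a b ≤ ‖(cubicP a b)^[n] z‖ := by
      calc Rad a b ≤ ‖z‖ := hz
        _ ≤ 2 ^ n * ‖z‖ := le_mul_of_one_le_left hz0 hp
        _ ≤ _ := ih
    rw [Function.iterate_succ_apply']
    calc 2 ^ (n + 1) * ‖z‖ = 2 * (2 ^ n * ‖z‖) := by ring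
      _ ≤ 2 * ‖(cubicP a b)^[n] z‖ := by linarith
      _ ≤ _ := escape_step a b _ h1

lemma bounded_iff (a b z : ℂ) :
    Bornology.IsBounded (Set.range fun m : ℕ => (cubicP a b)^[m] z) ↔
      ∀ m : ℕ, ‖(cubicP a b)^[m] z‖ ≤ Rad a b := by
  constructor
  · intro h m
    by_contra hm
    push_neg at hm
    obtain ⟨C, hC⟩ := isBounded_iff_forall_norm_le.1 h
    obtain ⟨k, hk⟩ := pow_unbounded_of_one_lt C (by norm_num : (1:ℝ) < 2)
    have h1 : Rad a b ≤ ‖(cubicP a b)^[m] z‖ := hm.le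
    have h2 := escape a b _ h1 k
    rw [← Function.iterate_add_apply] at h2
    have h3 := hC _ ⟨k + m, rfl⟩
    have h4 : (1:ℝ) ≤ ‖(cubicP a b)^[m] z‖ := le_trans (one_le_Rad a b) h1
    nlinarith [pow_pos (by norm_num : (0:ℝ) < 2) k]
  · intro h
    apply Bornology.IsBounded.subset (Metric.isBounded_closedBall (x := (0:ℂ)) (r := Rad a b))
    rintro x ⟨m, rfl⟩
    simpa [Metric.mem_closedBall, dist_zero_right] using h m

lemma cont_iter (m : ℕ) {g : ℂ × ℂ → ℂ} (hg : Continuous g) :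
    Continuous fun p : ℂ × ℂ => (cubicP p.1 p.2)^[m] (g p) := by
  induction m with
  | zero => simpa using hg
  | succ n ih =>
    simp only [Function.iterate_succ_apply']
    unfold cubicP
    exact ((ih.pow 3).sub ((continuous_const.mul (continuous_fst.pow 2)).mul ih)).add
      continuous_snd

lemma cont_Rad : Continuous fun p : ℂ × ℂ => Rad p.1 p.2 :=
  Real.continuous_sqrt.comp
    (((continuous_const.mul (continuous_fst.norm.pow 2)).add continuous_snd.norm).add
      continuous_const)

theorem stmt_8 :
    IsCompact {p : ℂ × ℂ |
      Bornology.IsBounded (Set.range fun m : ℕ => (cubicP p.1 p.2)^[m] p.1) ∧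
      Bornology.IsBounded (Set.range fun m : ℕ => (cubicP p.1 p.2)^[m] (-p.1))} := by
  have hset : {p : ℂ × ℂ |
      Bornology.IsBounded (Set.range fun m : ℕ => (cubicP p.1 p.2)^[m] p.1) ∧
      Bornology.IsBounded (Set.range fun m : ℕ => (cubicP p.1 p.2)^[m] (-p.1))} =
      (⋂ m : ℕ, {p : ℂ × ℂ | ‖(cubicP p.1 p.2)^[m] p.1‖ ≤ Rad p.1 p.2}) ∩
      (⋂ m : ℕ, {p : ℂ × ℂ | ‖(cubicP p.1 p.2)^[m] (-p.1)‖ ≤ Rad p.1 p.2}) := by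
    ext p
    simp only [Set.mem_setOf_eq, bounded_iff, Set.mem_inter_iff, Set.mem_iInter]
  rw [hset]
  apply Metric.isCompact_of_isClosed_isBounded
  · refine IsClosed.inter (isClosed_iInter fun m => isClosed_le ?_ cont_Rad)
      (isClosed_iInter fun m => isClosed_le ?_ cont_Rad)
    · exact (cont_iter m continuous_fst).norm
    · exact (cont_iter m continuous_fst.neg).norm
  · apply Bornology.IsBounded.subset (Metric.isBounded_closedBall (x := (0 : ℂ × ℂ)) (r := 14))
    rintro ⟨a, b⟩ ⟨h₁, h₂⟩
    simp only [Set.mem_iInter, Set.mem_setOf_eq] at h₁ h₂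
    have e0 : ‖a‖ ≤ Rad a b := by simpa using h₁ 0
    have e1 : ‖b - 2 * a ^ 3‖ ≤ Rad a b := by
      have := h₁ 1
      rw [Function.iterate_one] at this
      simpa [show cubicP a b a = b - 2 * a ^ 3 by unfold cubicP; ring] using this
    have e2 : ‖b + 2 * a ^ 3‖ ≤ Rad a b := by
      have := h₂ 1
      rw [Function.iterate_one] at this
      simpa [show cubicP a b (-a) = b + 2 * a ^ 3 by unfold cubicP; ring] using this
    have ha3 : 2 * ‖a‖ ^ 3 ≤ Rad a b := by
      have h4 : ‖(4:ℂ) * a ^ 3‖ ≤ 2 * Rad a b := by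
        calc ‖(4:ℂ) * a ^ 3‖ = ‖(b + 2 * a ^ 3) - (b - 2 * a ^ 3)‖ := by ring_nf
          _ ≤ ‖b + 2 * a ^ 3‖ + ‖b - 2 * a ^ 3‖ := norm_sub_le _ _
          _ ≤ _ := by linarith
      have h5 : ‖(4:ℂ) * a ^ 3‖ = 4 * ‖a‖ ^ 3 := by simp [norm_mul, norm_pow]
      linarith
    have hb : ‖b‖ ≤ Rad a b := by
      have h4 : ‖(2:ℂ) * b‖ ≤ 2 * Rad a b := by
        calc ‖(2:ℂ) * b‖ = ‖(b + 2 * a ^ 3) + (b - 2 * a ^ 3)‖ := by ring_nf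
          _ ≤ ‖b + 2 * a ^ 3‖ + ‖b - 2 * a ^ 3‖ := norm_add_le _ _
          _ ≤ _ := by linarith
      have h5 : ‖(2:ℂ) * b‖ = 2 * ‖b‖ := by simp [norm_mul]
      linarith
    have hRsq := Rad_sq a b
    have hR1 := one_le_Rad a b
    have hra : ‖a‖ ≤ 2 := by
      nlinarith [norm_nonneg a, norm_nonneg b, sq_nonneg (Rad a b - 1),
        sq_nonneg (‖a‖ - 2), sq_nonneg ‖a‖]
    have hR14 : Rad a b ≤ 14 := by nlinarith [norm_nonneg a, norm_nonneg b]
    have hba : ‖b‖ ≤ 14 := le_trans hb hR14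
    simp only [Metric.mem_closedBall, dist_zero_right, Prod.norm_def]
    exact max_le (by simpa using hra.trans (by norm_num)) (by simpa using hba)
end

section
/- For every n ≥ 1, the connectedness locus of S_n, namely the set C = {(a,b) ∈ S_n : the forward orbit of −a under P_{a,b} is bounded}, is a compact subset of ℂ². -/
/-- `z` has exact (minimal) period `n` under `f`. -/
def HasExactPeriod (f : ℂ → ℂ) (n : ℕ) (z : ℂ) : Prop :=
  f^[n] z = z ∧ ∀ k, 1 ≤ k → k < n → f^[k] z ≠ z

/-- The curve `S_n` of parameters for which the critical point `a` has exact period `n`. -/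
def Scurve (n : ℕ) : Set (ℂ × ℂ) :=
  {p | HasExactPeriod (cubicP p.1 p.2) n p.1}

open Function Set Metric Bornology Filter Topology NNReal

theorem Function.IsPeriodicPt.finite_range_iterate {α : Type*} {f : α → α} {x : α} {n : ℕ}
    (hx : IsPeriodicPt f n x) (hn : 0 < n) : (range fun m => f^[m] x).Finite := by
  refine ((finite_Iio n).image fun k => f^[k] x).subset ?_
  rintro _ ⟨m, rfl⟩
  exact ⟨m % n, Nat.mod_lt m hn, hx.iterate_mod_apply m⟩

theorem Function.IsPeriodicPt.isFixedPt_of_lipschitzOnWith {X : Type*} [MetricSpace X]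
    {h : X → X} {B : Set X} {K : ℝ≥0} (hK : K < 1) (hB : MapsTo h B B)
    (hL : LipschitzOnWith K h B) {z : X} (hz : z ∈ B) {s : ℕ} (hs : 0 < s)
    (hper : IsPeriodicPt h s z) : IsFixedPt h z := by
  set g := hB.restrict h B B
  have hg : ContractingWith (K ^ s) g^[s] :=
    ⟨pow_lt_one₀ K.2 hK hs.ne', (hL.mapsToRestrict hB).iterate s⟩
  have hgz : IsPeriodicPt g s ⟨z, hz⟩ := by
    apply Subtype.ext
    rw [hB.iterate_restrict]
    exact hper
  exact congrArg Subtype.val (hg.fixedPoint_unique' hgz.apply hgz)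

theorem cubicP_sub_cubicP (a b z w : ℂ) :
    cubicP a b z - cubicP a b w = (z - w) * (z ^ 2 + z * w + w ^ 2 - 3 * a ^ 2) := by
  unfold cubicP; ring

@[fun_prop]
theorem Continuous.iterate_cubicP {X : Type*} [TopologicalSpace X] {a b z : X → ℂ}
    (ha : Continuous a) (hb : Continuous b) (hz : Continuous z) (m : ℕ) :
    Continuous fun x => (cubicP (a x) (b x))^[m] (z x) := by
  induction m with
  | zero => exact hz
  | succ m ih =>
    simp only [iterate_succ_apply']
    unfold cubicP
    fun_prop

theorem two_mul_norm_le_norm_cubicP {a b z : ℂ} (hz : 3 * ‖a‖ ^ 2 + ‖b‖ + 2 ≤ ‖z‖ ^ 2) :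
    2 * ‖z‖ ≤ ‖cubicP a b z‖ := by
  have hlower : ‖z‖ ^ 3 - 3 * ‖a‖ ^ 2 * ‖z‖ - ‖b‖ ≤ ‖cubicP a b z‖ := by
    have h1 := norm_sub_norm_le (z ^ 3) (3 * a ^ 2 * z)
    have h2 := norm_sub_le (z ^ 3 - 3 * a ^ 2 * z + b) b
    simp only [add_sub_cancel_right, norm_pow, norm_mul, RCLike.norm_ofNat] at h1 h2
    show _ ≤ ‖z ^ 3 - 3 * a ^ 2 * z + b‖
    linarith
  nlinarith [norm_nonneg z, norm_nonneg a, norm_nonneg b]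

theorem pow_two_mul_norm_le_norm_iterate_cubicP {a b z : ℂ}
    (hz : 3 * ‖a‖ ^ 2 + ‖b‖ + 2 ≤ ‖z‖ ^ 2) (m : ℕ) :
    2 ^ m * ‖z‖ ≤ ‖(cubicP a b)^[m] z‖ := by
  induction m with
  | zero => simp
  | succ m ih =>
    have hm : 3 * ‖a‖ ^ 2 + ‖b‖ + 2 ≤ ‖(cubicP a b)^[m] z‖ ^ 2 := by
      have : ‖z‖ ≤ ‖(cubicP a b)^[m] z‖ :=
        le_trans (le_mul_of_one_le_left (norm_nonneg z) (one_le_pow₀ one_le_two)) ih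
      nlinarith [norm_nonneg z]
    rw [iterate_succ_apply', pow_succ]
    nlinarith [two_mul_norm_le_norm_cubicP hm]

theorem isBounded_range_iterate_cubicP_iff {a b z : ℂ} :
    IsBounded (range fun m => (cubicP a b)^[m] z) ↔
      ∀ m, ‖(cubicP a b)^[m] z‖ ^ 2 ≤ 3 * ‖a‖ ^ 2 + ‖b‖ + 2 := by
  constructor
  · intro hbdd m
    by_contra! hm
    obtain ⟨C, hC⟩ := isBounded_iff_forall_norm_le.1 hbdd
    have hpos : 0 < ‖(cubicP a b)^[m] z‖ := by
      nlinarith [norm_nonneg ((cubicP a b)^[m] z), norm_nonneg a, norm_nonneg b]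
    obtain ⟨k, hk⟩ := pow_unbounded_of_one_lt (C / ‖(cubicP a b)^[m] z‖) one_lt_two
    have hesc := pow_two_mul_norm_le_norm_iterate_cubicP hm.le k
    rw [← iterate_add_apply] at hesc
    have := hC _ ⟨k + m, rfl⟩
    rw [div_lt_iff₀ hpos] at hk
    linarith
  · intro h
    refine isBounded_iff_forall_norm_le.2 ⟨3 * ‖a‖ ^ 2 + ‖b‖ + 2, ?_⟩
    rintro _ ⟨m, rfl⟩
    nlinarith [h m, norm_nonneg a, norm_nonneg b]

theorem norm_le_of_isBounded_critical_orbits {a b : ℂ}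
    (ha : IsBounded (range fun m => (cubicP a b)^[m] a))
    (hb : IsBounded (range fun m => (cubicP a b)^[m] (-a))) : ‖a‖ ≤ 2 ∧ ‖b‖ ≤ 5 := by
  have hu := isBounded_range_iterate_cubicP_iff.1 ha 1
  have hv := isBounded_range_iterate_cubicP_iff.1 hb 1
  have eu : (cubicP a b)^[1] a = b - 2 * a ^ 3 := by simp only [iterate_one, cubicP]; ring
  have ev : (cubicP a b)^[1] (-a) = b + 2 * a ^ 3 := by simp only [iterate_one, cubicP]; ring
  rw [eu] at hu
  rw [ev] at hv
  have h4a : 4 * ‖a‖ ^ 3 ≤ ‖b + 2 * a ^ 3‖ + ‖b - 2 * a ^ 3‖ := by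
    have := norm_sub_le (b + 2 * a ^ 3) (b - 2 * a ^ 3)
    rwa [show b + 2 * a ^ 3 - (b - 2 * a ^ 3) = 4 * a ^ 3 by ring, norm_mul, norm_pow,
      RCLike.norm_ofNat] at this
  have h2b : 2 * ‖b‖ ≤ ‖b + 2 * a ^ 3‖ + ‖b - 2 * a ^ 3‖ := by
    have := norm_add_le (b + 2 * a ^ 3) (b - 2 * a ^ 3)
    rwa [show b + 2 * a ^ 3 + (b - 2 * a ^ 3) = 2 * b by ring, norm_mul,
      RCLike.norm_ofNat] at this
  have hsq : (‖b + 2 * a ^ 3‖ + ‖b - 2 * a ^ 3‖) ^ 2 ≤ 4 * (3 * ‖a‖ ^ 2 + ‖b‖ + 2) := by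
    nlinarith [sq_nonneg (‖b + 2 * a ^ 3‖ - ‖b - 2 * a ^ 3‖)]
  have ha6 := (pow_le_pow_left₀ (by positivity) h4a 2).trans hsq
  have hb2 := (pow_le_pow_left₀ (by positivity) h2b 2).trans hsq
  have hA0 := norm_nonneg a
  have hB0 := norm_nonneg b
  have hb' : ‖b‖ ≤ 3 * ‖a‖ ^ 2 + 3 := by nlinarith
  have hA : ‖a‖ ≤ 2 := by
    by_contra! hA
    nlinarith [pow_le_pow_left₀ (by norm_num) hA.le 4]
  exact ⟨hA, by nlinarith⟩

noncomputable def cubicDivDiff (a b : ℂ) (m : ℕ) (z w : ℂ) : ℂ :=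
  ∏ i ∈ Finset.range m, ((cubicP a b)^[i] z ^ 2 + (cubicP a b)^[i] z * (cubicP a b)^[i] w
    + (cubicP a b)^[i] w ^ 2 - 3 * a ^ 2)

theorem iterate_cubicP_sub_iterate_cubicP (a b : ℂ) (m : ℕ) (z w : ℂ) :
    (cubicP a b)^[m] z - (cubicP a b)^[m] w = (z - w) * cubicDivDiff a b m z w := by
  induction m with
  | zero => simp [cubicDivDiff]
  | succ m ih =>
    rw [iterate_succ_apply', iterate_succ_apply', cubicP_sub_cubicP, ih, cubicDivDiff,
      cubicDivDiff, Finset.prod_range_succ, mul_assoc]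

theorem cubicDivDiff_self_self {a b : ℂ} {m : ℕ} (hm : 0 < m) : cubicDivDiff a b m a a = 0 :=
  Finset.prod_eq_zero (Finset.mem_range.2 hm) (by rw [iterate_zero_apply]; ring)

theorem continuous_cubicDivDiff (m : ℕ) :
    Continuous fun q : (ℂ × ℂ) × ℂ × ℂ => cubicDivDiff q.1.1 q.1.2 m q.2.1 q.2.2 := by
  unfold cubicDivDiff
  fun_prop

theorem exists_lipschitzOnWith_iterate_cubicP (p : ℂ × ℂ) {m : ℕ} (hm : 0 < m) :
    ∃ δ > 0, ∀ᶠ q in 𝓝 p,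
      LipschitzOnWith (1 / 2) ((cubicP q.1 q.2)^[m]) (closedBall p.1 δ) := by
  have hsmall : ∀ᶠ x in 𝓝 (p, p.1, p.1),
      ‖cubicDivDiff x.1.1 x.1.2 m x.2.1 x.2.2‖ < 1 / 2 := by
    have := (continuous_cubicDivDiff m).norm.tendsto (p, p.1, p.1)
    rw [cubicDivDiff_self_self hm, norm_zero] at this
    exact this.eventually (gt_mem_nhds one_half_pos)
  obtain ⟨ε, hε, hball⟩ := Metric.eventually_nhds_iff_ball.1 hsmall
  refine ⟨ε / 2, half_pos hε, eventually_of_mem (ball_mem_nhds p hε) fun q hq => ?_⟩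
  refine LipschitzOnWith.of_dist_le_mul fun z hz w hw => ?_
  have hzw : (q, z, w) ∈ ball (p, p.1, p.1) ε := by
    simp only [mem_ball, Prod.dist_eq, max_lt_iff] at hq ⊢
    rw [mem_closedBall] at hz hw
    exact ⟨hq, by linarith, by linarith⟩
  rw [dist_eq_norm, dist_eq_norm, iterate_cubicP_sub_iterate_cubicP, norm_mul, mul_comm]
  push_cast
  exact mul_le_mul_of_nonneg_right (hball _ hzw).le (norm_nonneg _)

theorem eventually_isPeriodicPt_of_isPeriodicPt_iterate {p : ℂ × ℂ} {m : ℕ} (hm : 0 < m)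
    (hp : IsPeriodicPt (cubicP p.1 p.2) m p.1) :
    ∀ᶠ q in 𝓝 p, ∀ s, 0 < s → IsPeriodicPt (cubicP q.1 q.2)^[m] s q.1 →
      IsPeriodicPt (cubicP q.1 q.2) m q.1 := by
  obtain ⟨δ, hδ, hlip⟩ := exists_lipschitzOnWith_iterate_cubicP p hm
  have hcenter : ∀ᶠ q in 𝓝 p, dist ((cubicP q.1 q.2)^[m] p.1) p.1 < δ / 2 := by
    have hcont : Continuous fun q : ℂ × ℂ => (cubicP q.1 q.2)^[m] p.1 := by fun_prop
    have := hcont.tendsto p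
    rw [hp.eq] at this
    exact this.eventually (ball_mem_nhds p.1 (half_pos hδ))
  filter_upwards [hlip, hcenter, ball_mem_nhds p hδ] with q hL hc hq s hs hper
  have hmaps : MapsTo (cubicP q.1 q.2)^[m] (closedBall p.1 δ) (closedBall p.1 δ) := by
    intro z hz
    rw [mem_closedBall] at hz ⊢
    have := hL.dist_le_mul z hz p.1 (mem_closedBall_self hδ.le)
    push_cast at this
    linarith [dist_triangle ((cubicP q.1 q.2)^[m] z) ((cubicP q.1 q.2)^[m] p.1) p.1]
  have hq1 : q.1 ∈ closedBall p.1 δ := by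
    rw [mem_ball, Prod.dist_eq, max_lt_iff] at hq
    exact hq.1.le
  exact hper.isFixedPt_of_lipschitzOnWith (by norm_num) hmaps hL hq1 hs

theorem isClosed_setOf_isPeriodicPt_cubicP (n : ℕ) :
    IsClosed {p : ℂ × ℂ | IsPeriodicPt (cubicP p.1 p.2) n p.1} :=
  isClosed_eq (by fun_prop) continuous_fst

theorem isClosed_Scurve (n : ℕ) : IsClosed (Scurve n) := by
  refine isClosed_of_closure_subset fun p hp => ?_
  have hper : IsPeriodicPt (cubicP p.1 p.2) n p.1 :=
    closure_minimal (fun q hq => hq.1) (isClosed_setOf_isPeriodicPt_cubicP n) hp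
  refine ⟨hper, fun k hk hkn hfix => ?_⟩
  set m := minimalPeriod (cubicP p.1 p.2) p.1
  have hm : 0 < m := IsPeriodicPt.minimalPeriod_pos hk hfix
  have hmk : m ≤ k := IsPeriodicPt.minimalPeriod_le hk hfix
  have hmn : m ∣ n := hper.minimalPeriod_dvd
  obtain ⟨q, hSq, hq⟩ := ((mem_closure_iff_frequently.1 hp).and_eventually
    (eventually_isPeriodicPt_of_isPeriodicPt_iterate hm (isPeriodicPt_minimalPeriod _ _))).exists
  have hqper : IsPeriodicPt (cubicP q.1 q.2)^[m] (n / m) q.1 := by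
    rw [IsPeriodicPt, IsFixedPt, ← iterate_mul, Nat.mul_div_cancel' hmn]
    exact hSq.1
  exact hSq.2 m hm (by omega) (hq _ (Nat.div_pos (Nat.le_of_dvd (by omega) hmn) hm) hqper)

theorem isClosed_setOf_isBounded_orbit {c : ℂ × ℂ → ℂ} (hc : Continuous c) :
    IsClosed {p : ℂ × ℂ | IsBounded (range fun m => (cubicP p.1 p.2)^[m] (c p))} := by
  simp only [isBounded_range_iterate_cubicP_iff, ofPred_forall]
  exact isClosed_iInter fun m => isClosed_le (by fun_prop) (by fun_prop)

theorem stmt_9 (n : ℕ) (hn : 1 ≤ n) :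
    IsCompact {p : ℂ × ℂ | p ∈ Scurve n ∧
      Bornology.IsBounded (Set.range fun m : ℕ => (cubicP p.1 p.2)^[m] (-p.1))} := by
  refine isCompact_of_isClosed_isBounded
    ((isClosed_Scurve n).inter (isClosed_setOf_isBounded_orbit continuous_fst.neg)) ?_
  refine (isBounded_closedBall (x := (0 : ℂ × ℂ)) (r := 5)).subset fun p hp => ?_
  have hcrit : IsBounded (range fun m => (cubicP p.1 p.2)^[m] p.1) :=
    (IsPeriodicPt.finite_range_iterate hp.1.1 hn).isBounded
  obtain ⟨ha, hb⟩ := norm_le_of_isBounded_critical_orbits hcrit hp.2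
  rw [mem_closedBall_zero_iff, Prod.norm_def]
  exact max_le (ha.trans (by norm_num)) hb
end

section
/- Let f be a nonconstant polynomial in two variables with complex coefficients. Then every connected component of the zero set Z(f) = {(x,y) ∈ ℂ² : f(x,y) = 0} is an unbounded subset of ℂ². -/
/-!
If the component of `p` in `Z = Z(f)` is bounded, then, because components of a compact Hausdorff
space are intersections of clopen sets, `p` lies in a compact piece `C = Z ∩ V` of `Z` with `V`
open. The projection of `C` to the first coordinate is compact, and it is also open: through a
point `(x₀, y₀) ∈ C` the fibre `f (x₀, ·)` does not vanish identically (otherwise the whole vertical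
line would lie in `C`), so by the minimum modulus principle on a small circle around `y₀` its zero
persists inside `V` for all `x` near `x₀`. But `ℂ` has no nonempty compact open subset.
-/

open Set Metric Filter Topology

theorem Differentiable.mvPolynomial_eval {𝕜 E σ : Type*} [NontriviallyNormedField 𝕜]
    [NormedAddCommGroup E] [NormedSpace 𝕜 E] {g : E → σ → 𝕜}
    (hg : ∀ i, Differentiable 𝕜 (g · i)) (p : MvPolynomial σ 𝕜) :
    Differentiable 𝕜 fun x => MvPolynomial.eval (g x) p := by
  induction p using MvPolynomial.induction_on with
  | C a => simp only [MvPolynomial.eval_C]; exact differentiable_const a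
  | add p q hp hq => simp only [MvPolynomial.eval_add]; exact hp.add hq
  | mul_X p i hp => simp only [MvPolynomial.eval_mul, MvPolynomial.eval_X]; exact hp.mul (hg i)

theorem exists_isClopen_mem_subset_of_connectedComponent_subset {X : Type*} [TopologicalSpace X]
    [CompactSpace X] [T2Space X] {x : X} {U : Set X} (hU : IsOpen U)
    (h : connectedComponent x ⊆ U) : ∃ C, IsClopen C ∧ x ∈ C ∧ C ⊆ U := by
  rw [connectedComponent_eq_iInter_isClopen, ← disjoint_compl_left_iff_subset,
    disjoint_iff_inter_eq_empty] at h
  obtain ⟨u, hu⟩ := hU.isClosed_compl.isCompact.elim_finite_subfamily_closed _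
    (fun s : {s : Set X // IsClopen s ∧ x ∈ s} => s.2.1.isClosed) h
  refine ⟨⋂ s ∈ u, (s : Set X), isClopen_biInter_finset fun s _ => s.2.1,
    mem_iInter₂.2 fun s _ => s.2.2, ?_⟩
  rwa [← disjoint_compl_left_iff_subset, disjoint_iff_inter_eq_empty]

theorem IsClosed.exists_isOpen_mem_isCompact_inter_of_connectedComponentIn_subset
    {X : Type*} [TopologicalSpace X] [T2Space X] {Z K : Set X} {p : X} (hZ : IsClosed Z)
    (hp : p ∈ Z) (hK : IsCompact K) (hsub : connectedComponentIn Z p ⊆ interior K) :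
    ∃ V, IsOpen V ∧ p ∈ V ∧ IsCompact (Z ∩ V) := by
  set Z' := Z ∩ K
  have : CompactSpace Z' := isCompact_iff_compactSpace.1 (hK.inter_left hZ)
  have hpZ' : p ∈ Z' := ⟨hp, interior_subset (hsub (mem_connectedComponentIn hp))⟩
  have hcomp : connectedComponentIn Z' p = connectedComponentIn Z p :=
    (connectedComponentIn_mono p inter_subset_left).antisymm <|
      isPreconnected_connectedComponentIn.subset_connectedComponentIn
        (mem_connectedComponentIn hp) fun z hz =>
          ⟨connectedComponentIn_subset Z p hz, interior_subset (hsub hz)⟩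
  have hcc : connectedComponent (⟨p, hpZ'⟩ : Z') ⊆ Subtype.val ⁻¹' interior K := fun z hz =>
    hsub (hcomp ▸ connectedComponentIn_eq_image hpZ' ▸ mem_image_of_mem _ hz)
  obtain ⟨C, hC, hpC, hCK⟩ := exists_isClopen_mem_subset_of_connectedComponent_subset
    (isOpen_interior.preimage continuous_subtype_val) hcc
  obtain ⟨O, hO, rfl⟩ := isOpen_induced_iff.1 hC.isOpen
  refine ⟨O ∩ interior K, hO.inter isOpen_interior, ⟨hpC, hCK hpC⟩, ?_⟩
  have hZV : Z ∩ (O ∩ interior K) = Subtype.val '' (Subtype.val ⁻¹' O : Set Z') := by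
    rw [Subtype.image_preimage_coe]
    ext z
    constructor
    · rintro ⟨hzZ, hzO, hzK⟩
      exact ⟨⟨hzZ, interior_subset hzK⟩, hzO⟩
    · rintro ⟨⟨hzZ, hzK⟩, hzO⟩
      exact ⟨hzZ, hzO, hCK (show (⟨z, hzZ, hzK⟩ : Z') ∈ Subtype.val ⁻¹' O from hzO)⟩
  rw [hZV]
  exact hC.isClosed.isCompact.image continuous_subtype_val

theorem Complex.exists_mem_closedBall_eq_zero_of_norm_lt {g : ℂ → ℂ} {c : ℂ} {r m : ℝ}
    (hr : 0 < r) (hg : DiffContOnCl ℂ g (ball c r)) (hc : ‖g c‖ < m)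
    (hm : ∀ z ∈ sphere c r, m ≤ ‖g z‖) : ∃ z ∈ closedBall c r, g z = 0 := by
  by_contra! hne
  have hm₀ : 0 < m := (norm_nonneg _).trans_lt hc
  have hinv := hg.inv (by rwa [closure_ball c hr.ne'])
  have hbound := Complex.norm_le_of_forall_mem_frontier_norm_le isBounded_ball hinv (C := m⁻¹)
    (fun z hz => by
      rw [frontier_ball c hr.ne'] at hz
      rw [Pi.inv_apply, norm_inv]
      exact inv_anti₀ hm₀ (hm z hz))
    (subset_closure (mem_ball_self hr))
  have hgc : 0 < ‖g c‖ := norm_pos_iff.2 (hne c (mem_closedBall_self hr.le))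
  rw [Pi.inv_apply, norm_inv, inv_le_inv₀ hgc hm₀] at hbound
  exact hbound.not_gt hc

theorem Differentiable.eventually_forall_sphere_ne_zero {g : ℂ → ℂ} (hg : Differentiable ℂ g)
    (hne : ∃ z, g z ≠ 0) (c : ℂ) : ∀ᶠ r in 𝓝[>] (0 : ℝ), ∀ z ∈ sphere c r, g z ≠ 0 := by
  have hiso : ∀ᶠ z in 𝓝[≠] c, g z ≠ 0 := by
    refine not_frequently.1 fun hfreq => ?_
    obtain ⟨z, hz⟩ := hne
    have hanalytic : AnalyticOnNhd ℂ g univ := fun w _ => hg.analyticAt w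
    exact hz <| hanalytic.eqOn_zero_of_preconnected_of_frequently_eq_zero isPreconnected_univ
      (mem_univ c) (by simpa using hfreq) (mem_univ z)
  obtain ⟨r₀, hr₀, hball⟩ := Metric.eventually_nhds_iff.1 (eventually_nhdsWithin_iff.1 hiso)
  filter_upwards [Ioo_mem_nhdsGT hr₀] with r hr z hz
  exact hball (by rw [mem_sphere.1 hz]; exact hr.2) (ne_of_mem_sphere hz hr.1.ne')

theorem Continuous.eventually_exists_zero_mem {X : Type*} [TopologicalSpace X]
    {F : X × ℂ → ℂ} (hF : Continuous F) (hFy : ∀ x, Differentiable ℂ fun y => F (x, y))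
    {x₀ : X} {y₀ : ℂ} (h₀ : F (x₀, y₀) = 0) (hne : ∃ y, F (x₀, y) ≠ 0)
    {V : Set (X × ℂ)} (hV : V ∈ 𝓝 (x₀, y₀)) :
    ∀ᶠ x in 𝓝 x₀, ∃ y, (x, y) ∈ V ∧ F (x, y) = 0 := by
  obtain ⟨U, hU, W, hW, hUW⟩ := mem_nhds_prod_iff.1 hV
  obtain ⟨ε, hε, hεW⟩ := Metric.mem_nhds_iff.1 hW
  obtain ⟨r, hr_ne, hrε⟩ := (((hFy x₀).eventually_forall_sphere_ne_zero hne y₀).and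
    (Ioo_mem_nhdsGT hε)).exists
  obtain ⟨w, hw, hwmin⟩ := (isCompact_sphere y₀ r).exists_isMinOn
    (NormedSpace.sphere_nonempty.2 hrε.1.le) (hFy x₀).continuous.norm.continuousOn
  set m := ‖F (x₀, w)‖
  have hm : 0 < m := norm_pos_iff.2 (hr_ne w hw)
  have hclose : ∀ᶠ x in 𝓝 x₀, ∀ z ∈ sphere y₀ r, ‖F (x, z) - F (x₀, z)‖ < m / 2 :=
    (isCompact_sphere y₀ r).eventually_forall_of_forall_eventually fun z _ =>
      (show Continuous fun q : X × ℂ => ‖F q - F (x₀, q.2)‖ by fun_prop).continuousAt.eventually_lt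
        continuousAt_const (by simpa using half_pos hm)
  have hsmall : ∀ᶠ x in 𝓝 x₀, ‖F (x, y₀)‖ < m / 2 :=
    (show Continuous fun x => ‖F (x, y₀)‖ by fun_prop).continuousAt.eventually_lt
      continuousAt_const (by simpa [h₀] using half_pos hm)
  filter_upwards [hU, hclose, hsmall] with x hxU hxclose hxsmall
  obtain ⟨y, hy, hy₀⟩ := Complex.exists_mem_closedBall_eq_zero_of_norm_lt hrε.1
    (hFy x).diffContOnCl hxsmall fun z hz => by
      have hmin : m ≤ ‖F (x₀, z)‖ := hwmin hz
      have := norm_sub_norm_le (F (x₀, z)) (F (x, z))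
      rw [norm_sub_rev] at this
      linarith [hxclose z hz]
  exact ⟨y, hUW ⟨hxU, hεW (closedBall_subset_ball hrε.2 hy)⟩, hy₀⟩

theorem exists_ne_zero_of_isCompact_zero_inter {X : Type*} [TopologicalSpace X] [T2Space X]
    {F : X × ℂ → ℂ} {V : Set (X × ℂ)} (hV : IsOpen V) (hC : IsCompact ({q | F q = 0} ∩ V))
    {q : X × ℂ} (hq : q ∈ V) : ∃ y, F (q.1, y) ≠ 0 := by
  by_contra! hline
  set ι : ℂ → X × ℂ := fun y => (q.1, y)
  have hι : Continuous ι := by fun_prop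
  have hfiber : IsClopen (ι ⁻¹' V) := by
    refine ⟨?_, hV.preimage hι⟩
    have hV_eq : ι ⁻¹' V = ι ⁻¹' ({q | F q = 0} ∩ V) := by ext y; simp [ι, hline y]
    rw [hV_eq]
    exact hC.isClosed.preimage hι
  have hV_univ := hfiber.eq_univ ⟨q.2, hq⟩
  refine noncompact_univ ℂ ((hC.image continuous_snd).of_isClosed_subset isClosed_univ ?_)
  intro y _
  exact ⟨(q.1, y), ⟨hline y, hV_univ.ge (mem_univ y)⟩, rfl⟩

theorem Continuous.zero_inter_eq_empty_of_isCompact {X : Type*} [TopologicalSpace X]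
    [T2Space X] [PreconnectedSpace X] [NoncompactSpace X] {F : X × ℂ → ℂ} (hF : Continuous F)
    (hFy : ∀ x, Differentiable ℂ fun y => F (x, y)) {V : Set (X × ℂ)} (hV : IsOpen V)
    (hC : IsCompact ({q | F q = 0} ∩ V)) : {q | F q = 0} ∩ V = ∅ := by
  have hopen : IsOpen (Prod.fst '' ({q | F q = 0} ∩ V)) := by
    refine isOpen_iff_mem_nhds.2 ?_
    rintro _ ⟨q, ⟨hq₀, hqV⟩, rfl⟩
    filter_upwards [hF.eventually_exists_zero_mem hFy hq₀
      (exists_ne_zero_of_isCompact_zero_inter hV hC hqV) (hV.mem_nhds hqV)]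
      with x ⟨y, hyV, hy₀⟩
    exact ⟨(x, y), ⟨hy₀, hyV⟩, rfl⟩
  have hcpt := hC.image continuous_fst
  rcases isClopen_iff.1 ⟨hcpt.isClosed, hopen⟩ with h | h
  · exact image_eq_empty.1 h
  · exact absurd (h ▸ hcpt) (noncompact_univ X)

theorem stmt_10_general (f : MvPolynomial (Fin 2) ℂ) :
    ∀ p ∈ {q : ℂ × ℂ | MvPolynomial.eval (fun i : Fin 2 => if i = 0 then q.1 else q.2) f = 0},
      ¬ Bornology.IsBounded (connectedComponentIn
        {q : ℂ × ℂ | MvPolynomial.eval (fun i : Fin 2 => if i = 0 then q.1 else q.2) f = 0}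
        p) := by
  intro p hp hbdd
  set F : ℂ × ℂ → ℂ := fun q =>
    MvPolynomial.eval (fun i : Fin 2 => if i = 0 then q.1 else q.2) f
  have hF : Differentiable ℂ F := Differentiable.mvPolynomial_eval
    (fun i => by fin_cases i <;> simp) f
  obtain ⟨R, hR⟩ := hbdd.subset_ball 0
  have hZ : IsClosed {q | F q = 0} := isClosed_eq hF.continuous continuous_const
  obtain ⟨V, hV, hpV, hC⟩ := hZ.exists_isOpen_mem_isCompact_inter_of_connectedComponentIn_subset
    hp (isCompact_closedBall 0 R) (hR.trans ball_subset_interior_closedBall)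
  have hempty := hF.continuous.zero_inter_eq_empty_of_isCompact
    (fun x => hF.comp ((differentiable_const x).prodMk differentiable_id)) hV hC
  exact hempty.subset ⟨hp, hpV⟩

theorem stmt_10 (f : MvPolynomial (Fin 2) ℂ) (hf : ¬ ∃ c : ℂ, f = MvPolynomial.C c) :
    ∀ p ∈ {q : ℂ × ℂ | MvPolynomial.eval (fun i : Fin 2 => if i = 0 then q.1 else q.2) f = 0},
      ¬ Bornology.IsBounded (connectedComponentIn
        {q : ℂ × ℂ | MvPolynomial.eval (fun i : Fin 2 => if i = 0 then q.1 else q.2) f = 0}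
        p) :=
  stmt_10_general f
end

section
/- For each n ∈ {1, 2, 3}, the set S_n is a connected subset of ℂ². -/
/-!
Write `b = a + 2a³ - x`, so that `P_{a,b}` sends its critical point `a` to `a - x`. Since
`P w - P a = (w - a)² (w + 2a)`, the period conditions become polynomial equations in `(a, x)`:
`S₁` and `S₂` are continuous images of `ℂ` and `{0}ᶜ`, while `S₃` is the image of the curve
`t (1 + t)² (x² + 1) = -1`, `x ≠ 0`, where `t = x² - 3ax`. That curve is the double cover
`x² = -(1 + t(1+t)²) / (t(1+t)²)` of the plane minus finitely many points; lifting paths through the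
squaring covering `ℂˣ → ℂˣ` shows that it is path-connected, because a small loop around `t = 0`
exchanges its two sheets.
-/

open Set

section ExactPeriod

variable {f : ℂ → ℂ} {z : ℂ}

lemma hasExactPeriod_one_iff : HasExactPeriod f 1 z ↔ f z = z :=
  ⟨And.left, fun h => ⟨h, fun k hk₁ hk₂ => absurd hk₂ (by omega)⟩⟩

lemma hasExactPeriod_two_iff : HasExactPeriod f 2 z ↔ f (f z) = z ∧ f z ≠ z := by
  refine ⟨fun ⟨h₂, hk⟩ => ⟨h₂, hk 1 le_rfl one_lt_two⟩, fun ⟨h₂, h₁⟩ => ⟨h₂, fun k hk₁ hk₂ => ?_⟩⟩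
  obtain rfl : k = 1 := by omega
  exact h₁

lemma hasExactPeriod_three_iff :
    HasExactPeriod f 3 z ↔ f (f (f z)) = z ∧ f z ≠ z ∧ f (f z) ≠ z := by
  refine ⟨fun ⟨h₃, hk⟩ => ⟨h₃, hk 1 le_rfl (by norm_num), hk 2 one_le_two (by norm_num)⟩,
    fun ⟨h₃, h₁, h₂⟩ => ⟨h₃, fun k hk₁ hk₂ => ?_⟩⟩
  interval_cases k
  exacts [h₁, h₂]

end ExactPeriod

/-- The parameter `(a, b)` for which `P_{a,b}` maps its critical point `a` to `a - x`. -/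
def cubicParam (a x : ℂ) : ℂ × ℂ := (a, a + 2 * a ^ 3 - x)

lemma cubicParam_surjective : Function.Surjective (Function.uncurry cubicParam) :=
  fun p => ⟨(p.1, p.1 + 2 * p.1 ^ 3 - p.2), by simp [cubicParam]⟩

lemma cubicParam_inj {a x a' x' : ℂ} : cubicParam a x = cubicParam a' x' ↔ a = a' ∧ x = x' := by
  simp only [cubicParam, Prod.mk.injEq]
  constructor
  · rintro ⟨rfl, h⟩; exact ⟨rfl, by linear_combination -h⟩
  · rintro ⟨rfl, rfl⟩; exact ⟨rfl, rfl⟩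

lemma continuous_cubicParam : Continuous (Function.uncurry cubicParam) := by
  unfold Function.uncurry cubicParam; fun_prop

lemma cubicP_crit (a x : ℂ) : cubicP a (a + 2 * a ^ 3 - x) a = a - x := by
  unfold cubicP; ring

lemma cubicP_sub_cubicP_crit (a b w : ℂ) :
    cubicP a b w - cubicP a b a = (w - a) ^ 2 * (w + 2 * a) := by
  unfold cubicP; ring

lemma cubicParam_mem_Scurve_one_iff {a x : ℂ} : cubicParam a x ∈ Scurve 1 ↔ x = 0 := by
  simp only [Scurve, cubicParam, mem_ofPred_eq, hasExactPeriod_one_iff, cubicP_crit]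
  constructor <;> intro h <;> linear_combination -h

lemma cubicParam_mem_Scurve_two_iff {a x : ℂ} :
    cubicParam a x ∈ Scurve 2 ↔ x ≠ 0 ∧ x * (3 * a - x) = 1 := by
  simp only [Scurve, cubicParam, mem_ofPred_eq, hasExactPeriod_two_iff, cubicP_crit]
  have h₂ : cubicP a (a + 2 * a ^ 3 - x) (a - x) - a = x * (x * (3 * a - x) - 1) := by
    linear_combination cubicP_sub_cubicP_crit a (a + 2 * a ^ 3 - x) (a - x) + cubicP_crit a x
  rw [← sub_eq_zero, h₂, mul_eq_zero, sub_eq_zero, Ne, sub_eq_self]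
  tauto

lemma Scurve_one_eq_range : Scurve 1 = range fun a => cubicParam a 0 := by
  ext p
  obtain ⟨⟨a, x⟩, rfl⟩ := cubicParam_surjective p
  simp only [Function.uncurry_apply_pair, cubicParam_mem_Scurve_one_iff, mem_range, cubicParam_inj]
  exact ⟨by rintro rfl; exact ⟨a, rfl, rfl⟩, by rintro ⟨a, rfl, rfl⟩; rfl⟩

lemma Scurve_two_eq_image : Scurve 2 = (fun x => cubicParam ((x + x⁻¹) / 3) x) '' {0}ᶜ := by
  ext p
  obtain ⟨⟨a, x⟩, rfl⟩ := cubicParam_surjective p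
  simp only [Function.uncurry_apply_pair, cubicParam_mem_Scurve_two_iff, mem_image,
    mem_compl_singleton_iff, cubicParam_inj]
  constructor
  · rintro ⟨hx, h⟩
    refine ⟨x, hx, ?_, rfl⟩
    field_simp
    linear_combination -h
  · rintro ⟨x, hx, rfl, rfl⟩
    exact ⟨hx, by field_simp; ring⟩

/-- The curve `t (1 + t)² (x² + 1) = -1`, `x ≠ 0`: if `P_{a,b}` maps `a ↦ a - x ↦ a - x - t x`,
then `a` has exact period `3` iff `(t, x)` lies on it. -/
def threeCycleCurve : Set (ℂ × ℂ) := {p | p.2 ≠ 0 ∧ p.1 * (1 + p.1) ^ 2 * (p.2 ^ 2 + 1) = -1}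

lemma cubicParam_mem_Scurve_three_iff {a x : ℂ} :
    cubicParam a x ∈ Scurve 3 ↔ (x ^ 2 - 3 * a * x, x) ∈ threeCycleCurve := by
  simp only [Scurve, threeCycleCurve, cubicParam, mem_ofPred_eq, hasExactPeriod_three_iff,
    cubicP_crit]
  have h₂ : cubicP a (a + 2 * a ^ 3 - x) (a - x) = a - x - (x ^ 2 - 3 * a * x) * x := by
    linear_combination cubicP_sub_cubicP_crit a (a + 2 * a ^ 3 - x) (a - x) + cubicP_crit a x
  have h₃ : cubicP a (a + 2 * a ^ 3 - x) (a - x - (x ^ 2 - 3 * a * x) * x) - a =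
      -x * ((x ^ 2 - 3 * a * x) * (1 + (x ^ 2 - 3 * a * x)) ^ 2 * (x ^ 2 + 1) + 1) := by
    linear_combination cubicP_sub_cubicP_crit a (a + 2 * a ^ 3 - x)
      (a - x - (x ^ 2 - 3 * a * x) * x) + cubicP_crit a x
  rw [h₂, ← sub_eq_zero (a := cubicP _ _ _), h₃]
  generalize x ^ 2 - 3 * a * x = t
  constructor
  · rintro ⟨h, hx, -⟩
    have hx : x ≠ 0 := fun h => hx (by rw [h, sub_zero])
    refine ⟨hx, ?_⟩
    have := (mul_eq_zero.1 h).resolve_left (neg_ne_zero.2 hx)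
    linear_combination this
  · rintro ⟨hx, h⟩
    have ht : 1 + t ≠ 0 := by rintro ht; simp [ht] at h
    refine ⟨by rw [h]; ring, fun h => hx (by linear_combination -h), fun h' => ?_⟩
    exact mul_ne_zero hx ht (by linear_combination -h')

lemma Scurve_three_eq_image :
    Scurve 3 = (fun p => cubicParam ((p.2 ^ 2 - p.1) / (3 * p.2)) p.2) '' threeCycleCurve := by
  ext q
  obtain ⟨⟨a, x⟩, rfl⟩ := cubicParam_surjective q
  simp only [Function.uncurry_apply_pair, cubicParam_mem_Scurve_three_iff, mem_image,
    cubicParam_inj, Prod.exists]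
  constructor
  · intro h
    exact ⟨_, _, h, by field_simp [h.1]; ring, rfl⟩
  · rintro ⟨t, x, hC, rfl, rfl⟩
    convert hC using 2
    field_simp [hC.1]
    ring

open unitInterval in
lemma exists_continuousMap_sq_eq (γ : C(I, ℂ)) (hγ : ∀ s, γ s ≠ 0) {u₀ : ℂ}
    (hu₀ : u₀ ^ 2 = γ 0) : ∃ Γ : C(I, ℂ), Γ 0 = u₀ ∧ ∀ s, Γ s ^ 2 = γ s := by
  have hu₀' : u₀ ≠ 0 := by rintro rfl; exact hγ 0 (by simp [← hu₀])
  obtain ⟨Γ, hΓ, hΓ₀⟩ := (isCoveringMap_npow (𝕜 := ℂ) 2 two_ne_zero).exists_path_lifts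
    ⟨fun s => ⟨γ s, hγ s⟩, by fun_prop⟩ ⟨u₀, hu₀'⟩ (Subtype.ext hu₀.symm)
  exact ⟨⟨fun s => Γ s, by fun_prop⟩, congrArg Subtype.val hΓ₀,
    fun s => congrArg Subtype.val (congrFun hΓ s)⟩

theorem isPathConnected_setOf_sq_eq {X : Type*} [TopologicalSpace X] {B : Set X} {f : X → ℂ}
    (hB : IsPathConnected B) (hf : ContinuousOn f B) (hf₀ : ∀ x ∈ B, f x ≠ 0) {x₀ : X} {u₀ : ℂ}
    (hswap : JoinedIn {p : X × ℂ | p.1 ∈ B ∧ p.2 ^ 2 = f p.1} (x₀, u₀) (x₀, -u₀)) :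
    IsPathConnected {p : X × ℂ | p.1 ∈ B ∧ p.2 ^ 2 = f p.1} := by
  have h₀ := hswap.source_mem
  refine ⟨(x₀, u₀), h₀, fun p hp => ?_⟩
  obtain ⟨γ, hγ⟩ := hB.joinedIn p.1 hp.1 x₀ h₀.1
  obtain ⟨Γ, hΓ₀, hΓ⟩ := exists_continuousMap_sq_eq ⟨f ∘ γ, hf.comp_continuous γ.continuous hγ⟩
    (fun s => hf₀ _ (hγ s)) (u₀ := p.2) (by simpa using hp.2)
  have hlift : JoinedIn {p : X × ℂ | p.1 ∈ B ∧ p.2 ^ 2 = f p.1} p (x₀, Γ 1) :=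
    ⟨⟨⟨fun s => (γ s, Γ s), by fun_prop⟩, by simp [hΓ₀], by simp⟩, fun s => ⟨hγ s, hΓ s⟩⟩
  have hend : Γ 1 ^ 2 = u₀ ^ 2 := (hΓ 1).trans (by simpa using h₀.2.symm)
  rcases sq_eq_sq_iff_eq_or_eq_neg.1 hend with h | h
  · exact (h ▸ hlift).symm
  · exact hswap.trans (h ▸ hlift).symm

/-- Along the circle `t = e^{2πis}/9` the point `x = 3i e^{-πis} √(1 + t(1+t)²) / (1+t)` stays on
the curve; the principal square root is continuous since `‖t(1+t)²‖ < 1`, and after one turn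
`e^{-πis}` has changed sign. -/
lemma exists_joinedIn_threeCycleCurve_neg :
    ∃ x₀, JoinedIn threeCycleCurve (1 / 9, x₀) (1 / 9, -x₀) := by
  set e : ℝ → ℂ := fun s => Complex.exp (↑(Real.pi * s) * Complex.I)
  set τ : ℝ → ℂ := fun s => e s ^ 2 / 9
  have hτ : ∀ s, ‖τ s‖ = 1 / 9 := fun s => by
    simp only [τ, e, norm_div, norm_pow, Complex.norm_exp_ofReal_mul_I]; norm_num
  have hτ₁ : ∀ s, 1 + τ s ≠ 0 := fun s h => by
    have := hτ s; rw [eq_neg_of_add_eq_zero_right h, norm_neg, norm_one] at this; norm_num at this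
  have hslit : ∀ s, 1 + τ s * (1 + τ s) ^ 2 ∈ Complex.slitPlane := fun s => by
    refine Complex.mem_slitPlane_of_norm_lt_one ?_
    calc ‖τ s * (1 + τ s) ^ 2‖ ≤ 1 / 9 * (1 + 1 / 9) ^ 2 := by
          rw [norm_mul, norm_pow, hτ]; gcongr
          exact (norm_add_le _ _).trans (by rw [norm_one, hτ])
      _ < 1 := by norm_num
  set ξ : ℝ → ℂ := fun s =>
    3 * Complex.I * (1 + τ s * (1 + τ s) ^ 2) ^ (2⁻¹ : ℂ) / (e s * (1 + τ s))
  have he₀ : e 0 = 1 := by simp [e]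
  have he₁ : e 1 = -1 := by simp [e, Complex.exp_pi_mul_I]
  have hτ₀ : τ 0 = 1 / 9 := by simp [τ, he₀]
  have hτ₁' : τ 1 = 1 / 9 := by simp [τ, he₁]
  refine ⟨ξ 0, JoinedIn.ofLine (f := fun s => (τ s, ξ s)) ?_ (by rw [hτ₀]) ?_ ?_⟩
  · have hcont : Continuous τ := by fun_prop
    refine Continuous.continuousOn (hcont.prodMk ?_)
    have hroot : Continuous fun s => (1 + τ s * (1 + τ s) ^ 2) ^ (2⁻¹ : ℂ) :=
      (by fun_prop : Continuous fun s => 1 + τ s * (1 + τ s) ^ 2).cpow continuous_const hslit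
    exact (continuous_const.mul hroot).div (by fun_prop)
      fun s => mul_ne_zero (Complex.exp_ne_zero _) (hτ₁ s)
  · simp only [ξ, hτ₀, hτ₁', he₀, he₁]
    exact Prod.ext rfl (by ring)
  · rintro _ ⟨s, -, rfl⟩
    have hsq := Complex.cpow_ofNat_inv_pow (1 + τ s * (1 + τ s) ^ 2) 2
    have he : e s ^ 2 = 9 * τ s := by simp only [τ]; ring
    have hτ₀ : τ s ≠ 0 := fun h => by simpa [h] using hτ s
    have hroot : (1 + τ s * (1 + τ s) ^ 2) ^ (2⁻¹ : ℂ) ≠ 0 := fun h => by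
      simp only [h] at hsq; exact Complex.slitPlane_ne_zero (hslit s) (by simpa using hsq.symm)
    refine ⟨div_ne_zero (mul_ne_zero (by simp) hroot)
      (mul_ne_zero (Complex.exp_ne_zero _) (hτ₁ s)), ?_⟩
    simp only [ξ, div_pow, mul_pow, hsq, he, Complex.I_sq]
    field_simp [hτ₁ s]
    ring

lemma threeCycleCurve_eq_setOf_sq_eq :
    threeCycleCurve = {p : ℂ × ℂ | p.1 ∈ {t | t * (1 + t) ^ 2 * (1 + t * (1 + t) ^ 2) ≠ 0} ∧
      p.2 ^ 2 = -(1 + p.1 * (1 + p.1) ^ 2) / (p.1 * (1 + p.1) ^ 2)} := by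
  ext ⟨t, x⟩
  simp only [threeCycleCurve, mem_ofPred_eq]
  generalize t * (1 + t) ^ 2 = k
  rw [mul_ne_zero_iff]
  constructor
  · rintro ⟨hx, h⟩
    have hk : k ≠ 0 := by rintro rfl; simp at h
    have hk₁ : 1 + k ≠ 0 := fun h' =>
      hx (by simpa [hk] using (by linear_combination h - h' : k * x ^ 2 = 0))
    refine ⟨⟨hk, hk₁⟩, ?_⟩
    field_simp
    linear_combination h
  · rintro ⟨⟨hk, hk₁⟩, h⟩
    refine ⟨by rintro rfl; exact hk₁ (by field_simp at h; linear_combination h), ?_⟩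
    rw [h]
    field_simp
    ring

open Polynomial in
lemma isPathConnected_setOf_eval_ne_zero {q : ℂ[X]} (hq : q ≠ 0) :
    IsPathConnected {t | q.eval t ≠ 0} := by
  simpa only [compl_ofPred, IsRoot.def] using
    (finite_setOfPred_isRoot hq).countable.isPathConnected_compl_of_one_lt_rank (by simp)

open Polynomial in
lemma isPathConnected_threeCycleCurve : IsPathConnected threeCycleCurve := by
  have hB : IsPathConnected {t : ℂ | t * (1 + t) ^ 2 * (1 + t * (1 + t) ^ 2) ≠ 0} := by
    have hq : (X * (1 + X) ^ 2 * (1 + X * (1 + X) ^ 2) : ℂ[X]) ≠ 0 := fun h => by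
      have := congrArg (eval 1) h
      norm_num at this
    simpa using isPathConnected_setOf_eval_ne_zero hq
  obtain ⟨x₀, hswap⟩ := exists_joinedIn_threeCycleCurve_neg
  rw [threeCycleCurve_eq_setOf_sq_eq] at hswap ⊢
  refine isPathConnected_setOf_sq_eq (f := fun t => -(1 + t * (1 + t) ^ 2) / (t * (1 + t) ^ 2))
    hB ?_ (fun t ht => ?_) hswap
  · exact ContinuousOn.div (by fun_prop) (by fun_prop) fun t ht => left_ne_zero_of_mul ht
  · exact div_ne_zero (neg_ne_zero.2 (right_ne_zero_of_mul ht)) (left_ne_zero_of_mul ht)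

theorem stmt_16 : ∀ n : ℕ, n = 1 ∨ n = 2 ∨ n = 3 → IsConnected (Scurve n) := by
  rintro n (rfl | rfl | rfl)
  · rw [Scurve_one_eq_range]
    exact isConnected_range (by unfold cubicParam; fun_prop)
  · rw [Scurve_two_eq_image]
    refine (isConnected_compl_singleton_of_one_lt_rank (by simp) 0).image _ ?_
    exact continuous_cubicParam.comp_continuousOn
      (((continuousOn_id.add continuousOn_inv₀).div_const 3).prodMk continuousOn_id)
  · rw [Scurve_three_eq_image]
    refine isPathConnected_threeCycleCurve.isConnected.image _ ?_
    exact continuous_cubicParam.comp_continuousOn (((by fun_prop : Continuous _).continuousOn.div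
      (by fun_prop) fun p (hp : p ∈ threeCycleCurve) => mul_ne_zero three_ne_zero hp.1).prodMk
      continuousOn_snd)
end
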